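/- Let k be a field and B a coalgebra over k equipped with an ℕ-filtration, i.e. an increasing family of subspaces F_0B ⊆ F_1B ⊆ ⋯ with B = ∪_{n≥0} F_nB and Δ(x) ∈ Σ_{i=0}^n F_iB ⊗ F_{n-i}B for every x ∈ F_nB and every n. Let U be a nonzero left B-comodule with coaction δ : U → B ⊗ U. Then there exists a nonzero element u ∈ U with δ(u) ∈ F_0B ⊗ U. -/

import Mathlib

/-!
If `δ u ∈ F_{n+1}B ⊗ U` but `δ u ∉ F_nB ⊗ U`, take a functional `φ` on `B` vanishing on `F_nB`
with `v := (φ ⊗ id)(δ u) ≠ 0`. Coassociativity gives `δ v = (ψ ⊗ id)(δ u)` for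
`ψ b = φ(b₍₁₎) b₍₂₎`, and `ψ` maps `F_{n+1}B` into `F_0B`: in `Δ b ∈ Σᵢ F_iB ⊗ F_{n+1-i}B` the
terms with `i ≤ n` are killed by `φ`, and the one with `i = n + 1` has its right factor in `F_0B`.
So either `δ u` drops one filtration level or `v` is the required element; descending from a level
containing `δ u`, one reaches `F_0B ⊗ U`.
-/

open TensorProduct LinearMap

section Contraction

variable {R V W M : Type*} [CommSemiring R] [AddCommMonoid V] [Module R V]
  [AddCommMonoid W] [Module R W] [AddCommMonoid M] [Module R M]

lemma Submodule.map_range_rTensor_subtype_le {P : Submodule R V} {Q : Submodule R W}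
    (f : V →ₗ[R] W) (hf : ∀ x ∈ P, f x ∈ Q) :
    (range (P.subtype.rTensor M)).map (f.rTensor M) ≤ range (Q.subtype.rTensor M) := by
  rw [← range_comp, ← rTensor_comp, show f ∘ₗ P.subtype = Q.subtype ∘ₗ f.restrict hf from rfl,
    rTensor_comp]
  exact range_comp_le_range _ _

def leftContraction (φ : Module.Dual R V) (M : Type*) [AddCommMonoid M] [Module R M] :
    V ⊗[R] M →ₗ[R] M :=
  (TensorProduct.lid R M).toLinearMap ∘ₗ φ.rTensor M

@[simp]
lemma leftContraction_tmul (φ : Module.Dual R V) (v : V) (m : M) :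
    leftContraction φ M (v ⊗ₜ m) = φ v • m := by
  simp [leftContraction]

lemma leftContraction_comp (φ : Module.Dual R W) (f : V →ₗ[R] W) :
    leftContraction (φ ∘ₗ f) M = leftContraction φ M ∘ₗ f.rTensor M := by
  ext; simp

lemma leftContraction_comp_map_subtype (φ : Module.Dual R V) (P : Submodule R V)
    (Q : Submodule R M) :
    leftContraction φ M ∘ₗ TensorProduct.map P.subtype Q.subtype =
      Q.subtype ∘ₗ leftContraction (φ ∘ₗ P.subtype) Q := by
  ext; simp

end Contraction

lemma Submodule.finsetSum_le {R M ι : Type*} [Semiring R] [AddCommMonoid M] [Module R M]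
  (s : Finset ι) (p : ι → Submodule R M) (q : Submodule R M) (h : ∀ i ∈ s, p i ≤ q) :
    ∑ i ∈ s, p i ≤ q :=
  Finset.sum_induction _ (· ≤ q) (fun _ _ ha hb => sup_le ha hb) bot_le h

lemma Module.Free.exists_leftContraction_ne_zero {R X M : Type*} [CommRing R] [AddCommGroup X]
    [Module R X] [Module.Free R X] [AddCommGroup M] [Module R M] {t : X ⊗[R] M} (ht : t ≠ 0) :
    ∃ φ : Module.Dual R X, leftContraction φ M t ≠ 0 := by
  classical
  let b := Module.Free.chooseBasis R X
  obtain ⟨i, hi⟩ : ∃ i, equivFinsuppOfBasisLeft b t i ≠ 0 := by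
    by_contra! h
    exact ht ((equivFinsuppOfBasisLeft b).map_eq_zero_iff.mp (Finsupp.ext h))
  exact ⟨b.coord i, by rwa [equivFinsuppOfBasisLeft_apply] at hi⟩

lemma Submodule.exists_dual_leftContraction_ne_zero {k V M : Type*} [Field k] [AddCommGroup V]
    [Module k V] [AddCommGroup M] [Module k M] {W : Submodule k V} {t : V ⊗[k] M}
    (ht : t ∉ range (W.subtype.rTensor M)) :
    ∃ φ : Module.Dual k V, (∀ w ∈ W, φ w = 0) ∧ leftContraction φ M t ≠ 0 := by
  -- right exactness of `· ⊗ M`: the image of `t` in `(V ⧸ W) ⊗ M` is nonzero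
  rw [← rTensor_mkQ, mem_ker] at ht
  obtain ⟨ψ, hψ⟩ := Module.Free.exists_leftContraction_ne_zero ht
  refine ⟨ψ ∘ₗ W.mkQ, fun w hw => by simp [(Submodule.Quotient.mk_eq_zero W).mpr hw], ?_⟩
  rwa [leftContraction_comp]

section Comodule

variable {R B U : Type*} [CommSemiring R] [AddCommMonoid B] [Module R B] [Coalgebra R B]
  [AddCommMonoid U] [Module R U]

lemma coaction_leftContraction (δ : U →ₗ[R] B ⊗[R] U)
    (hδ : ∀ u : U, TensorProduct.assoc R B B U ((Coalgebra.comul (R := R)).rTensor U (δ u)) =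
      δ.lTensor B (δ u))
    (φ : Module.Dual R B) (u : U) :
    δ (leftContraction φ U (δ u)) =
      ((leftContraction φ B ∘ₗ Coalgebra.comul).rTensor U) (δ u) := by
  have natural : δ ∘ₗ leftContraction φ U = leftContraction φ (B ⊗[R] U) ∘ₗ δ.lTensor B := by
    ext; simp
  have reassoc : leftContraction φ (B ⊗[R] U) ∘ₗ (TensorProduct.assoc R B B U).toLinearMap =
      (leftContraction φ B).rTensor U := by
    ext; simp [smul_tmul']
  calc δ (leftContraction φ U (δ u))
      = leftContraction φ (B ⊗[R] U) (δ.lTensor B (δ u)) := congr($natural (δ u))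
    _ = (leftContraction φ B).rTensor U ((Coalgebra.comul (R := R)).rTensor U (δ u)) := by
      rw [← hδ, ← reassoc, coe_comp, LinearEquiv.coe_coe, Function.comp_apply]
    _ = ((leftContraction φ B ∘ₗ Coalgebra.comul).rTensor U) (δ u) := by
      rw [rTensor_comp_apply]

lemma leftContraction_comul_mem_of_mem_succ (F : ℕ → Submodule R B) (hmono : Monotone F)
    (hcomul : ∀ (n : ℕ), ∀ x ∈ F n,
      Coalgebra.comul (R := R) x ∈
        ∑ i ∈ Finset.range (n + 1), range (TensorProduct.map (F i).subtype (F (n - i)).subtype))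
    {n : ℕ} {φ : Module.Dual R B} (hφ : ∀ x ∈ F n, φ x = 0) {x : B} (hx : x ∈ F (n + 1)) :
    leftContraction φ B (Coalgebra.comul x) ∈ F 0 := by
  refine Submodule.finsetSum_le _ _ ((F 0).comap (leftContraction φ B)) ?_ (hcomul (n + 1) x hx)
  intro j hj
  rw [← Submodule.map_le_iff_le_comap, ← range_comp, leftContraction_comp_map_subtype]
  rcases le_or_gt j n with hjn | hjn
  · have hzero : leftContraction (φ ∘ₗ (F j).subtype) (F (n + 1 - j)) = 0 := by
      ext a b
      simp [hφ a (hmono hjn a.2)]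
    simp [hzero]
  · rw [Finset.mem_range] at hj
    exact (range_comp_le_range _ _).trans ((F _).range_subtype.trans_le (hmono (by omega)))

end Comodule

lemma exists_mem_range_rTensor_subtype {R V M : Type*} [CommSemiring R] [AddCommMonoid V]
    [Module R V] [AddCommMonoid M] [Module R M] (F : ℕ → Submodule R V) (hmono : Monotone F)
    (hcover : ∀ x : V, ∃ n, x ∈ F n) (t : V ⊗[R] M) :
    ∃ n, t ∈ range ((F n).subtype.rTensor M) := by
  have hS : Monotone fun n => range ((F n).subtype.rTensor M) := fun a b hab => by
    simpa [rTensor_id] using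
      Submodule.map_range_rTensor_subtype_le (M := M) LinearMap.id fun x hx => hmono hab hx
  rw [← Submodule.mem_iSup_of_directed _ hS.directed_le]
  induction t using TensorProduct.induction_on with
  | zero => exact zero_mem _
  | tmul v m =>
    obtain ⟨n, hn⟩ := hcover v
    exact Submodule.mem_iSup_of_mem n ⟨⟨v, hn⟩ ⊗ₜ m, rfl⟩
  | add s t hs ht => exact add_mem hs ht

lemma exists_ne_zero_coaction_mem_of_not_mem {k B U : Type*} [Field k] [AddCommGroup B]
    [Module k B] [Coalgebra k B] [AddCommGroup U] [Module k U] (δ : U →ₗ[k] B ⊗[k] U)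
    (hδ : ∀ u : U, TensorProduct.assoc k B B U ((Coalgebra.comul (R := k)).rTensor U (δ u)) =
      δ.lTensor B (δ u))
    (F : ℕ → Submodule k B) (hmono : Monotone F)
    (hcomul : ∀ (n : ℕ), ∀ x ∈ F n,
      Coalgebra.comul (R := k) x ∈
        ∑ i ∈ Finset.range (n + 1), range (TensorProduct.map (F i).subtype (F (n - i)).subtype))
    {n : ℕ} {u : U} (hsucc : δ u ∈ range ((F (n + 1)).subtype.rTensor U))
    (hn : δ u ∉ range ((F n).subtype.rTensor U)) :
    ∃ v : U, v ≠ 0 ∧ δ v ∈ range ((F 0).subtype.rTensor U) := by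
  obtain ⟨φ, hφ, hφu⟩ := Submodule.exists_dual_leftContraction_ne_zero hn
  refine ⟨leftContraction φ U (δ u), hφu, ?_⟩
  rw [coaction_leftContraction δ hδ]
  exact Submodule.map_range_rTensor_subtype_le _
    (fun x hx => leftContraction_comul_mem_of_mem_succ F hmono hcomul hφ hx)
    (Submodule.mem_map_of_mem hsucc)

theorem exists_coinvariant_of_filtration
    (k B U : Type*) [Field k]
    [AddCommGroup B] [Module k B] [Coalgebra k B]
    [AddCommGroup U] [Module k U] [Nontrivial U]
    (F : ℕ → Submodule k B)
    (hmono : Monotone F)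
    (hcover : ∀ x : B, ∃ n, x ∈ F n)
    (hcomul : ∀ (n : ℕ), ∀ x ∈ F n,
      Coalgebra.comul (R := k) x ∈
        ∑ i ∈ Finset.range (n + 1),
          LinearMap.range (TensorProduct.map (F i).subtype (F (n - i)).subtype))
    (δ : U →ₗ[k] B ⊗[k] U)
    (hδcoassoc : ∀ u : U,
      (TensorProduct.assoc k B B U)
          ((TensorProduct.map (Coalgebra.comul (R := k)) LinearMap.id) (δ u)) =
        (TensorProduct.map LinearMap.id δ) (δ u)) :
    ∃ u : U, u ≠ 0 ∧
      δ u ∈ LinearMap.range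
        (TensorProduct.map (F 0).subtype (LinearMap.id : U →ₗ[k] U)) := by
  obtain ⟨u, hu⟩ := exists_ne (0 : U)
  obtain ⟨n, hn⟩ := exists_mem_range_rTensor_subtype F hmono hcover (δ u)
  induction n with
  | zero => exact ⟨u, hu, hn⟩
  | succ n ih =>
    by_cases hlower : δ u ∈ range ((F n).subtype.rTensor U)
    · exact ih hlower
    · exact exists_ne_zero_coaction_mem_of_not_mem δ hδcoassoc F hmono hcomul hn hlower
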